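/- arXiv:1201.4375 — 3 statements merged into one kernel-verified Lean document; each statement's English description precedes it below -/
import Mathlib

section
/- Let k ≥ 1 be an integer. In any Sperner k-partition system on a (2k+1)-element set that contains at least two partitions, every partition consists of exactly k-1 classes of size 2 and one class of size 3. -/
open Finset

/-- `P` is a partition of the finite set `X` into exactly `k` nonempty classes. -/
def IsPartitionInto {α : Type*} [DecidableEq α] (X : Finset α) (k : ℕ)
    (P : Finset (Finset α)) : Prop :=
  P.card = k ∧ (∀ A ∈ P, A.Nonempty) ∧ (∀ A ∈ P, A ⊆ X) ∧
    ∀ x ∈ X, ∃! A, A ∈ P ∧ x ∈ A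

/-- `Sys` is a Sperner `k`-partition system on the finite set `X`: every member is a
`k`-partition of `X` and no class of one partition is contained in a class of a
different partition of the system. -/
def IsSpernerPartitionSystem {α : Type*} [DecidableEq α] (X : Finset α) (k : ℕ)
    (Sys : Finset (Finset (Finset α))) : Prop :=
  (∀ P ∈ Sys, IsPartitionInto X k P) ∧
    ∀ P ∈ Sys, ∀ Q ∈ Sys, P ≠ Q → ∀ A ∈ P, ∀ B ∈ Q, ¬ A ⊆ B

/-- `SP n k` is the maximum number of partitions in a Sperner `k`-partition system
on an `n`-element set. -/
noncomputable def SP (n k : ℕ) : ℕ :=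
  sSup {m | ∃ Sys : Finset (Finset (Finset (Fin n))),
    IsSpernerPartitionSystem Finset.univ k Sys ∧ Sys.card = m}

/-!
Every class of a partition in a Sperner system with at least two members has at least two
elements: a singleton class `{x}` would lie in the class of `x` in any other partition. The `k`
class sizes are therefore at least `2` and sum to `2k + 1`, so their excesses over `2` sum to `1`:
exactly one class has size `3` and the others have size `2`.
-/

theorem Finset.card_filter_eq_two_and_eq_three_of_sum_eq {ι : Type*} {s : Finset ι} {f : ι → ℕ}
    (hf : ∀ i ∈ s, 2 ≤ f i) (hsum : ∑ i ∈ s, f i = 2 * #s + 1) :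
    #(s.filter fun i => f i = 2) = #s - 1 ∧ #(s.filter fun i => f i = 3) = 1 := by
  have hexcess : ∑ i ∈ s, (f i - 2) = 1 := by
    have : ∑ i ∈ s, f i = ∑ i ∈ s, (f i - 2) + ∑ _i ∈ s, 2 := by
      rw [← sum_add_distrib]
      exact sum_congr rfl fun i hi => by have := hf i hi; omega
    rw [sum_const, smul_eq_mul] at this
    omega
  have hle : ∀ i ∈ s, f i - 2 ≤ 1 := fun i hi =>
    hexcess ▸ single_le_sum (f := fun i => f i - 2) (fun _ _ => Nat.zero_le _) hi
  have hthree : #(s.filter fun i => f i = 3) = 1 := by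
    rw [card_filter, ← hexcess]
    exact sum_congr rfl fun i hi => by
      have := hf i hi; have := hle i hi; split_ifs <;> omega
  have htwo : s.filter (fun i => ¬f i = 2) = s.filter fun i => f i = 3 :=
    filter_congr fun i hi => by have := hf i hi; have := hle i hi; omega
  have hsplit := card_filter_add_card_filter_not (s := s) (p := fun i => f i = 2)
  rw [htwo, hthree] at hsplit
  exact ⟨by omega, hthree⟩

namespace IsPartitionInto

variable {α : Type*} [DecidableEq α] {X : Finset α} {k : ℕ} {P : Finset (Finset α)}

theorem pairwiseDisjoint (hP : IsPartitionInto X k P) :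
    (P : Set (Finset α)).PairwiseDisjoint id := by
  intro A hA B hB hAB
  rw [Function.onFun, disjoint_left]
  intro x hxA hxB
  obtain ⟨-, -, hsub, hunique⟩ := hP
  obtain ⟨C, -, hC⟩ := hunique x (hsub A hA hxA)
  exact hAB ((hC A ⟨hA, hxA⟩).trans (hC B ⟨hB, hxB⟩).symm)

theorem biUnion_eq (hP : IsPartitionInto X k P) : P.biUnion id = X := by
  obtain ⟨-, -, hsub, hunique⟩ := hP
  ext x
  simp only [mem_biUnion, id]
  refine ⟨fun ⟨A, hA, hxA⟩ => hsub A hA hxA, fun hx => ?_⟩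
  obtain ⟨A, ⟨hA, hxA⟩, -⟩ := hunique x hx
  exact ⟨A, hA, hxA⟩

theorem sum_card_eq (hP : IsPartitionInto X k P) : ∑ A ∈ P, #A = #X := by
  rw [← hP.biUnion_eq, card_biUnion hP.pairwiseDisjoint]
  rfl

end IsPartitionInto

theorem IsSpernerPartitionSystem.two_le_card_of_mem {α : Type*} [DecidableEq α] {X : Finset α}
    {k : ℕ} {Sys : Finset (Finset (Finset α))} (hS : IsSpernerPartitionSystem X k Sys)
    (hcard : 2 ≤ #Sys) {P : Finset (Finset α)} (hP : P ∈ Sys) {A : Finset α} (hA : A ∈ P) :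
    2 ≤ #A := by
  obtain ⟨hpart, hsperner⟩ := hS
  obtain ⟨-, hne, hsub, -⟩ := hpart P hP
  obtain ⟨x, hx⟩ := hne A hA
  by_contra! hA1
  obtain ⟨Q, hQ, hQP⟩ := exists_mem_ne (show 1 < #Sys by omega) P
  obtain ⟨-, -, -, hunique⟩ := hpart Q hQ
  obtain ⟨B, ⟨hB, hxB⟩, -⟩ := hunique x (hsub A hA hx)
  refine hsperner P hP Q hQ hQP.symm A hA B hB fun y hy => ?_
  rwa [card_le_one.mp (by omega) y hy x hx]

theorem sperner_two_k_add_one_shape_general (k : ℕ)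
    (Sys : Finset (Finset (Finset (Fin (2 * k + 1)))))
    (hS : IsSpernerPartitionSystem Finset.univ k Sys) (h2 : 2 ≤ Sys.card) :
    ∀ P ∈ Sys, (P.filter (fun A => A.card = 2)).card = k - 1 ∧
      (P.filter (fun A => A.card = 3)).card = 1 := by
  intro P hP
  have hpart := hS.1 P hP
  have hsum : ∑ A ∈ P, #A = 2 * #P + 1 := by
    rw [hpart.sum_card_eq, card_univ, Fintype.card_fin, hpart.1]
  have hshape := card_filter_eq_two_and_eq_three_of_sum_eq
    (fun A hA => hS.two_le_card_of_mem h2 hP hA) hsum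
  rwa [hpart.1] at hshape

theorem sperner_two_k_add_one_shape (k : ℕ) (hk : 1 ≤ k)
    (Sys : Finset (Finset (Finset (Fin (2 * k + 1)))))
    (hS : IsSpernerPartitionSystem Finset.univ k Sys) (h2 : 2 ≤ Sys.card) :
    ∀ P ∈ Sys, (P.filter (fun A => A.card = 2)).card = k - 1 ∧
      (P.filter (fun A => A.card = 3)).card = 1 :=
  sperner_two_k_add_one_shape_general k Sys hS h2
end

section
/- For all integers n and k with n - k ≥ k ≥ 1, SP(n, k) ≥ k · SP(n-k, k); that is, from any Sperner k-partition system on an (n-k)-element set one obtains a Sperner k-partition system on an n-element set that is k times as large. -/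
open Finset

/-
Take `k` new points `y₀, …, y_{k-1}`. Enumerate the classes of each partition `P` of a Sperner
system on the old points as `A₀, …, A_{k-1}` and, for every shift `j < k`, form the partition
with classes `Aᵢ ∪ {y_{i+j mod k}}`. Removing the new points recovers the old classes, so
containments between classes of partitions coming from different `P` are still excluded; for the
same `P` and different shifts, a class `Aᵢ` receives different new points, so again no
containment holds.
-/

namespace IsPartitionInto

variable {α : Type*} [DecidableEq α] {X : Finset α} {k : ℕ} {P : Finset (Finset α)}

theorem eq_of_subset (hP : IsPartitionInto X k P) {A B : Finset α} (hA : A ∈ P) (hB : B ∈ P)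
    (hAB : A ⊆ B) : A = B := by
  obtain ⟨a, ha⟩ := hP.2.1 A hA
  obtain ⟨C, -, hC⟩ := hP.2.2.2 a (hP.2.2.1 A hA ha)
  exact (hC A ⟨hA, ha⟩).trans (hC B ⟨hB, hAB ha⟩).symm

end IsPartitionInto

theorem isSpernerPartitionSystem_image_of_pairwise {α ι : Type*} [DecidableEq α] [Fintype ι]
    {X : Finset α} {k : ℕ} (hk : 0 < k) (F : ι → Finset (Finset α))
    (hF : ∀ i, IsPartitionInto X k (F i))
    (hsep : Pairwise fun i j => ∀ A ∈ F i, ∀ B ∈ F j, ¬ A ⊆ B) :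
    IsSpernerPartitionSystem X k (univ.image F) ∧ (univ.image F).card = Fintype.card ι := by
  -- `F i` has a class (as `0 < k`), and that class is contained in itself
  have hinj : Function.Injective F := by
    intro i j hij
    by_contra hne
    obtain ⟨A, hA⟩ := card_pos.1 ((hF i).1.symm ▸ hk)
    exact hsep hne A hA A (hij ▸ hA) subset_rfl
  refine ⟨⟨?_, ?_⟩, card_image_of_injective _ hinj⟩
  · simpa using hF
  · simp only [mem_image, mem_univ, true_and]
    rintro _ ⟨i, rfl⟩ _ ⟨j, rfl⟩ hne
    exact hsep fun h => hne (congrArg F h)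

theorem bddAbove_SP_set (n k : ℕ) : BddAbove {m | ∃ Sys : Finset (Finset (Finset (Fin n))),
    IsSpernerPartitionSystem Finset.univ k Sys ∧ Sys.card = m} :=
  ⟨_, by rintro _ ⟨Sys, -, rfl⟩; exact card_le_univ Sys⟩

theorem le_SP {n k : ℕ} {Sys : Finset (Finset (Finset (Fin n)))}
    (hSys : IsSpernerPartitionSystem univ k Sys) : Sys.card ≤ SP n k :=
  le_csSup (bddAbove_SP_set n k) ⟨Sys, hSys, rfl⟩

theorem exists_card_eq_SP (n k : ℕ) :
    ∃ Sys : Finset (Finset (Finset (Fin n))), IsSpernerPartitionSystem univ k Sys ∧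
      Sys.card = SP n k :=
  Nat.sSup_mem (by exact ⟨0, ∅, by simp [IsSpernerPartitionSystem]⟩) (bddAbove_SP_set n k)

section Lift

variable {m k : ℕ}

/-- The old points of `Fin (m + k)` are `castAdd k a`, the new ones `natAdd m y = m + y`. -/
def liftClass (A : Finset (Fin m)) (y : Fin k) : Finset (Fin (m + k)) :=
  insert (Fin.natAdd m y) (A.map (Fin.castAddEmb k))

theorem castAdd_ne_natAdd (a : Fin m) (y : Fin k) : Fin.castAdd k a ≠ Fin.natAdd m y := by
  simp only [ne_eq, Fin.ext_iff, Fin.val_castAdd, Fin.val_natAdd]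
  omega

@[simp]
theorem castAdd_mem_liftClass {A : Finset (Fin m)} {y : Fin k} {a : Fin m} :
    Fin.castAdd k a ∈ liftClass A y ↔ a ∈ A := by
  rw [liftClass, mem_insert, ← Fin.castAddEmb_apply, mem_map']
  exact or_iff_right (castAdd_ne_natAdd a y)

@[simp]
theorem natAdd_mem_liftClass {A : Finset (Fin m)} {y z : Fin k} :
    Fin.natAdd m z ∈ liftClass A y ↔ z = y := by
  simp [liftClass, castAdd_ne_natAdd]

theorem liftClass_subset_liftClass_iff {A B : Finset (Fin m)} {y z : Fin k} :
    liftClass A y ⊆ liftClass B z ↔ A ⊆ B ∧ y = z := by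
  refine ⟨fun h => ⟨fun a ha => ?_, ?_⟩, ?_⟩
  · simpa using h (castAdd_mem_liftClass.2 ha)
  · exact natAdd_mem_liftClass.1 (h (natAdd_mem_liftClass.2 rfl))
  · rintro ⟨hAB, rfl⟩
    exact insert_subset_insert _ (map_subset_map.2 hAB)

def liftPartition (P : Finset (Finset (Fin m))) (f : P → Fin k) : Finset (Finset (Fin (m + k))) :=
  P.attach.image fun A => liftClass A.1 (f A)

theorem mem_liftPartition {P : Finset (Finset (Fin m))} {f : P → Fin k}
    {C : Finset (Fin (m + k))} : C ∈ liftPartition P f ↔ ∃ A : P, liftClass A.1 (f A) = C := by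
  simp [liftPartition]

theorem isPartitionInto_liftPartition {P : Finset (Finset (Fin m))}
    (hP : IsPartitionInto univ k P) {f : P → Fin k} (hf : Function.Bijective f) :
    IsPartitionInto univ k (liftPartition P f) := by
  obtain ⟨hcard, -, -, hcover⟩ := hP
  have hinj : Function.Injective fun A : P => liftClass A.1 (f A) := fun A B h =>
    Subtype.ext ((liftClass_subset_liftClass_iff.1 h.le).1.antisymm
      (liftClass_subset_liftClass_iff.1 h.ge).1)
  refine ⟨?_, ?_, fun _ _ => subset_univ _, fun x _ => ?_⟩
  · rw [liftPartition, card_image_of_injective _ hinj, card_attach, hcard]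
  · intro C hC
    obtain ⟨A, rfl⟩ := mem_liftPartition.1 hC
    exact ⟨_, natAdd_mem_liftClass.2 rfl⟩
  suffices ∃ A : P, x ∈ liftClass A.1 (f A) ∧ ∀ B : P, x ∈ liftClass B.1 (f B) → B = A by
    obtain ⟨A, hxA, huniq⟩ := this
    refine ⟨_, ⟨mem_liftPartition.2 ⟨A, rfl⟩, hxA⟩, ?_⟩
    rintro _ ⟨hC, hxC⟩
    obtain ⟨B, rfl⟩ := mem_liftPartition.1 hC
    rw [huniq B hxC]
  induction x using Fin.addCases with
  | left a =>
    obtain ⟨A, ⟨hA, ha⟩, huniq⟩ := hcover a (mem_univ a)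
    exact ⟨⟨A, hA⟩, castAdd_mem_liftClass.2 ha,
      fun B hB => Subtype.ext (huniq B ⟨B.2, castAdd_mem_liftClass.1 hB⟩)⟩
  | right y =>
    obtain ⟨A, rfl⟩ := hf.2 y
    exact ⟨A, natAdd_mem_liftClass.2 rfl, fun B hB => hf.1 (natAdd_mem_liftClass.1 hB).symm⟩

end Lift

theorem mul_SP_le_SP_add (m k : ℕ) : k * SP m k ≤ SP (m + k) k := by
  rcases k.eq_zero_or_pos with rfl | hk
  · simp
  have : NeZero k := ⟨hk.ne'⟩
  obtain ⟨Sys, hSys, hcard⟩ := exists_card_eq_SP m k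
  let e : ∀ P : Sys, P.1 ≃ Fin k := fun P =>
    Fintype.equivFinOfCardEq ((Fintype.card_coe _).trans (hSys.1 _ P.2).1)
  let F : Sys × Fin k → Finset (Finset (Fin (m + k))) := fun Pj =>
    liftPartition Pj.1.1 fun A => e Pj.1 A + Pj.2
  have hsep : Pairwise fun Pj Qj' => ∀ C ∈ F Pj, ∀ D ∈ F Qj', ¬ C ⊆ D := by
    rintro ⟨P, j⟩ ⟨Q, j'⟩ hne _ hC _ hD hCD
    obtain ⟨A, rfl⟩ := mem_liftPartition.1 hC
    obtain ⟨B, rfl⟩ := mem_liftPartition.1 hD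
    obtain ⟨hAB, hlabel⟩ := liftClass_subset_liftClass_iff.1 hCD
    by_cases hPQ : P = Q
    · subst hPQ
      obtain rfl : A = B := Subtype.ext ((hSys.1 _ P.2).eq_of_subset A.2 B.2 hAB)
      exact hne (congrArg _ (add_left_cancel hlabel))
    · exact hSys.2 P P.2 Q Q.2 (Subtype.coe_injective.ne hPQ) A A.2 B B.2 hAB
  obtain ⟨hSys', hcard'⟩ := isSpernerPartitionSystem_image_of_pairwise hk F
    (fun Pj => isPartitionInto_liftPartition (hSys.1 _ Pj.1.2)
      ((Equiv.addRight Pj.2).bijective.comp (e Pj.1).bijective)) hsep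
  calc k * SP m k = Fintype.card (Sys × Fin k) := by simp [hcard, mul_comm]
    _ ≤ SP (m + k) k := hcard' ▸ le_SP hSys'

theorem SP_ge_k_mul_SP_sub_k_general (n k : ℕ) (hn : k ≤ n - k) :
    k * SP (n - k) k ≤ SP n k := by
  obtain ⟨m, rfl⟩ := Nat.exists_eq_add_of_le' (hn.trans (Nat.sub_le n k))
  simpa using mul_SP_le_SP_add m k

theorem SP_ge_k_mul_SP_sub_k (n k : ℕ) (hk : 1 ≤ k) (hn : k ≤ n - k) :
    k * SP (n - k) k ≤ SP n k :=
  SP_ge_k_mul_SP_sub_k_general n k hn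
end

section
/- Let n, k, ℓ and r be integers with k ≥ 1, ℓ ≥ 1, n = ℓk + r and 0 ≤ r < k. Then SP(n, k) ≤ C(n, ℓ) / ((k - r) + r(ℓ+1)/(n-ℓ)), where C(n, ℓ) is the binomial coefficient (n choose ℓ). -/
open Finset

/-! The classes of all partitions in a Sperner system form an antichain, and distinct partitions
share no class, so by the LYM inequality `∑_P ∑_{A ∈ P} 1 / C(n, |A|) ≤ 1`. Binomial coefficients
are log-concave, so `j ↦ 1 / C(n, j)` is convex and each `k`-partition contributes at least its
value at the most balanced profile of class sizes, `(k - r) / C(n, ℓ) + r / C(n, ℓ + 1)`; this is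
the denominator of the bound divided by `C(n, ℓ)`. -/

theorem Nat.choose_mul_choose_add_two_le (n j : ℕ) :
    n.choose j * n.choose (j + 2) ≤ n.choose (j + 1) ^ 2 := by
  have h₁ := Nat.choose_succ_right_eq n j
  have h₂ := Nat.choose_succ_right_eq n (j + 1)
  refine Nat.le_of_mul_le_mul_right (c := (j + 1) * (j + 2)) ?_ (by positivity)
  calc n.choose j * n.choose (j + 2) * ((j + 1) * (j + 2))
      = n.choose j * (j + 1) * (n.choose (j + 1) * (n - (j + 1))) := by rw [← h₂]; ring
    _ ≤ n.choose j * (j + 2) * (n.choose (j + 1) * (n - j)) := by gcongr <;> omega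
    _ = n.choose (j + 1) * (j + 1) * n.choose (j + 1) * (j + 2) := by rw [h₁]; ring
    _ = n.choose (j + 1) ^ 2 * ((j + 1) * (j + 2)) := by ring

def DiscreteConvexOn (N : ℕ) (f : ℕ → ℝ) : Prop :=
  ∀ j, j + 2 ≤ N → 2 * f (j + 1) ≤ f j + f (j + 2)

namespace DiscreteConvexOn

variable {N : ℕ} {f : ℕ → ℝ}

theorem sub_le_sub (hf : DiscreteConvexOn N f) {i j : ℕ} (hij : i ≤ j) (hj : j + 1 ≤ N) :
    f (i + 1) - f i ≤ f (j + 1) - f j := by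
  induction j, hij using Nat.le_induction with
  | base => exact le_rfl
  | succ j _ ih => linarith [ih (by omega), hf j (by omega)]

theorem secant_le (hf : DiscreteConvexOn N f) {ℓ a : ℕ} (hℓ : ℓ + 1 ≤ N) (ha : a ≤ N) :
    f ℓ + ((a : ℝ) - ℓ) * (f (ℓ + 1) - f ℓ) ≤ f a := by
  rcases le_total ℓ a with hla | hal
  · induction a, hla using Nat.le_induction with
    | base => simp
    | succ a hla ih =>
      have := hf.sub_le_sub hla ha
      push_cast
      linarith [ih (by omega)]
  · induction hal using Nat.decreasingInduction with
    | self => simp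
    | of_succ a hal ih =>
      have := hf.sub_le_sub hal.le hℓ
      push_cast at ih
      linarith [ih (by omega)]

end DiscreteConvexOn

theorem discreteConvexOn_inv_choose (n : ℕ) :
    DiscreteConvexOn n fun j ↦ (n.choose j : ℝ)⁻¹ := by
  intro j hj
  have hx : (0 : ℝ) < n.choose j := by exact_mod_cast Nat.choose_pos (by omega)
  have hc : (0 : ℝ) < n.choose (j + 1) := by exact_mod_cast Nat.choose_pos (by omega)
  have hy : (0 : ℝ) < n.choose (j + 2) := by exact_mod_cast Nat.choose_pos hj
  have hlc : (n.choose j : ℝ) * n.choose (j + 2) ≤ (n.choose (j + 1) : ℝ) ^ 2 := by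
    exact_mod_cast Nat.choose_mul_choose_add_two_le n j
  rw [← div_eq_mul_inv, inv_add_inv hx.ne' hy.ne', div_le_div_iff₀ hc (by positivity)]
  nlinarith [sq_nonneg ((n.choose j : ℝ) - n.choose (j + 2)), mul_pos hx hy]

namespace IsPartitionInto

variable {α : Type*} [DecidableEq α] {X : Finset α} {k : ℕ} {P : Finset (Finset α)}

theorem eq_of_mem_of_mem (hP : IsPartitionInto X k P) {A B : Finset α} (hA : A ∈ P) (hB : B ∈ P)
    {x : α} (hxA : x ∈ A) (hxB : x ∈ B) : A = B := by
  obtain ⟨_, _, hu⟩ := hP.2.2.2 x (hP.2.2.1 A hA hxA)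
  exact (hu A ⟨hA, hxA⟩).trans (hu B ⟨hB, hxB⟩).symm

theorem sum_card (hP : IsPartitionInto X k P) : ∑ A ∈ P, A.card = X.card := by
  have hdisj : (P : Set (Finset α)).PairwiseDisjoint id := fun A hA B hB hAB ↦
    Finset.disjoint_left.2 fun _ hxA hxB ↦ hAB (hP.eq_of_mem_of_mem hA hB hxA hxB)
  have hcover : P.biUnion id = X := by
    refine Finset.Subset.antisymm (Finset.biUnion_subset.2 hP.2.2.1) fun x hx ↦ ?_
    obtain ⟨A, ⟨hA, hxA⟩, _⟩ := hP.2.2.2 x hx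
    exact Finset.mem_biUnion.2 ⟨A, hA, hxA⟩
  rw [← hcover, Finset.card_biUnion hdisj]
  rfl

theorem sum_comp_card_ge (hP : IsPartitionInto X k P) {f : ℕ → ℝ}
    (hf : DiscreteConvexOn X.card f) {ℓ r : ℕ} (hX : X.card = ℓ * k + r) (hℓ : ℓ + 1 ≤ X.card) :
    k * f ℓ + r * (f (ℓ + 1) - f ℓ) ≤ ∑ A ∈ P, f A.card := by
  have hsum : (∑ A ∈ P, (A.card : ℝ)) = ℓ * k + r := by exact_mod_cast hP.sum_card.trans hX
  calc k * f ℓ + r * (f (ℓ + 1) - f ℓ)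
      = ∑ A ∈ P, (f ℓ + ((A.card : ℝ) - ℓ) * (f (ℓ + 1) - f ℓ)) := by
        rw [Finset.sum_add_distrib, ← Finset.sum_mul, Finset.sum_sub_distrib, hsum,
          Finset.sum_const, Finset.sum_const, hP.1, nsmul_eq_mul, nsmul_eq_mul]
        ring
    _ ≤ ∑ A ∈ P, f A.card :=
        Finset.sum_le_sum fun A hA ↦ hf.secant_le hℓ (Finset.card_le_card (hP.2.2.1 A hA))

end IsPartitionInto

namespace IsSpernerPartitionSystem

variable {α : Type*} [DecidableEq α] {X : Finset α} {k : ℕ} {Sys : Finset (Finset (Finset α))}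

theorem isAntichain_biUnion (hS : IsSpernerPartitionSystem X k Sys) :
    IsAntichain (· ⊆ ·) (SetLike.coe (Sys.biUnion id)) := by
  intro A hA B hB hAB hsub
  obtain ⟨P, hP, hAP⟩ := Finset.mem_biUnion.1 hA
  obtain ⟨Q, hQ, hBQ⟩ := Finset.mem_biUnion.1 hB
  rcases eq_or_ne P Q with rfl | hPQ
  · exact hAB ((hS.1 P hP).eq_of_subset hAP hBQ hsub)
  · exact hS.2 P hP Q hQ hPQ A hAP B hBQ hsub

theorem pairwiseDisjoint (hS : IsSpernerPartitionSystem X k Sys) :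
    (Sys : Set (Finset (Finset α))).PairwiseDisjoint id := fun P hP Q hQ hPQ ↦
  Finset.disjoint_left.2 fun A hAP hAQ ↦ hS.2 P hP Q hQ hPQ A hAP A hAQ subset_rfl

theorem sum_sum_inv_choose_le_one [Fintype α] (hS : IsSpernerPartitionSystem univ k Sys) :
    ∑ P ∈ Sys, ∑ A ∈ P, ((Fintype.card α).choose A.card : ℝ)⁻¹ ≤ 1 := by
  calc _ = ∑ A ∈ Sys.biUnion id, ((Fintype.card α).choose A.card : ℝ)⁻¹ :=
        (Finset.sum_biUnion hS.pairwiseDisjoint).symm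
    _ ≤ 1 := Finset.lubell_yamamoto_meshalkin_inequality_sum_inv_choose hS.isAntichain_biUnion

end IsSpernerPartitionSystem

theorem Nat.cast_choose_succ_inv {n ℓ : ℕ} (h : ℓ < n) :
    (n.choose (ℓ + 1) : ℝ)⁻¹ = (ℓ + 1) / ((n - ℓ) * n.choose ℓ) := by
  have hrec : (n.choose (ℓ + 1) : ℝ) * (ℓ + 1) = n.choose ℓ * (n - ℓ) := by
    rw [← Nat.cast_sub h.le]
    exact_mod_cast Nat.choose_succ_right_eq n ℓ
  rw [mul_comm (n - ℓ : ℝ), ← hrec]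
  field_simp

theorem IsPartitionInto.div_choose_le_sum_inv_choose {α : Type*} [DecidableEq α] {X : Finset α}
    {k ℓ r n : ℕ} {P : Finset (Finset α)} (hP : IsPartitionInto X k P) (hℓ : 1 ≤ ℓ)
    (hX : X.card = n) (hn : n = ℓ * k + r) (hr : r < k) :
    ((k : ℝ) - r + r * (ℓ + 1) / (n - ℓ)) / n.choose ℓ ≤ ∑ A ∈ P, (n.choose A.card : ℝ)⁻¹ := by
  subst hX
  rcases lt_or_ge ℓ X.card with hℓX | hXℓ
  · have hgap : (0 : ℝ) < X.card - ℓ := by rw [sub_pos]; exact_mod_cast hℓX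
    calc _ = k * (X.card.choose ℓ : ℝ)⁻¹ +
          r * ((X.card.choose (ℓ + 1) : ℝ)⁻¹ - (X.card.choose ℓ : ℝ)⁻¹) := by
          rw [Nat.cast_choose_succ_inv hℓX]
          field_simp
          ring
      _ ≤ _ := hP.sum_comp_card_ge (discreteConvexOn_inv_choose X.card) hn hℓX
  · -- here `X.card = ℓ`, so `P` consists of the single class `X`
    obtain ⟨rfl, rfl⟩ : k = 1 ∧ r = 0 := by constructor <;> nlinarith
    obtain ⟨A, rfl⟩ := Finset.card_eq_one.1 hP.1
    have hA : A.card = ℓ := by simpa [hn] using hP.sum_card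
    simp [hA, hn]

theorem IsSpernerPartitionSystem.card_mul_le {α : Type*} [DecidableEq α] [Fintype α]
    {k ℓ r n : ℕ} {Sys : Finset (Finset (Finset α))} (hS : IsSpernerPartitionSystem univ k Sys)
    (hℓ : 1 ≤ ℓ) (hα : Fintype.card α = n) (hn : n = ℓ * k + r) (hr : r < k) :
    (Sys.card : ℝ) * ((k : ℝ) - r + r * (ℓ + 1) / (n - ℓ)) ≤ n.choose ℓ := by
  have hC : (0 : ℝ) < n.choose ℓ := by
    exact_mod_cast Nat.choose_pos (by rw [hn]; nlinarith)
  rw [← div_le_one hC, mul_div_assoc, ← nsmul_eq_mul]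
  calc _ ≤ ∑ P ∈ Sys, ∑ A ∈ P, (n.choose A.card : ℝ)⁻¹ :=
        Finset.card_nsmul_le_sum _ _ _ fun P hP ↦
          (hS.1 P hP).div_choose_le_sum_inv_choose hℓ (by rw [card_univ, hα]) hn hr
    _ ≤ 1 := hα ▸ hS.sum_sum_inv_choose_le_one

theorem SP_general_upper_general (n k ℓ r : ℕ) (hℓ : 1 ≤ ℓ)
    (hn : n = ℓ * k + r) (hr : r < k) :
    (SP n k : ℝ) ≤ (Nat.choose n ℓ : ℝ) /
      (((k : ℝ) - (r : ℝ)) + (r : ℝ) * ((ℓ : ℝ) + 1) / ((n : ℝ) - (ℓ : ℝ))) := by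
  have hD : 0 < ((k : ℝ) - r) + r * (ℓ + 1) / (n - ℓ) := by
    have hkr : (r : ℝ) < k := by exact_mod_cast hr
    have hℓn : (ℓ : ℝ) ≤ n := by exact_mod_cast (show ℓ ≤ n by rw [hn]; nlinarith)
    have : 0 ≤ (r : ℝ) * (ℓ + 1) / (n - ℓ) := by
      apply div_nonneg <;> [positivity; linarith]
    linarith
  calc (SP n k : ℝ) ≤ ⌊(n.choose ℓ : ℝ) / ((k - r) + r * (ℓ + 1) / (n - ℓ))⌋₊ := by
        refine Nat.cast_le.2 (csSup_le' ?_)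
        rintro _ ⟨Sys, hSys, rfl⟩
        exact Nat.le_floor ((le_div_iff₀ hD).2 (hSys.card_mul_le hℓ (Fintype.card_fin n) hn hr))
    _ ≤ _ := Nat.floor_le (div_nonneg (Nat.cast_nonneg _) hD.le)

theorem SP_general_upper (n k ℓ r : ℕ) (hk : 1 ≤ k) (hℓ : 1 ≤ ℓ)
    (hn : n = ℓ * k + r) (hr : r < k) :
    (SP n k : ℝ) ≤ (Nat.choose n ℓ : ℝ) /
      (((k : ℝ) - (r : ℝ)) + (r : ℝ) * ((ℓ : ℝ) + 1) / ((n : ℝ) - (ℓ : ℝ))) :=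
  SP_general_upper_general n k ℓ r hℓ hn hr
end
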